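/- Let μ be a Borel probability measure on ℝ², let Γ be a grid on ℝ² with C cells, let n ≥ 2, and let D_n be the empirical measure of n iid points drawn from μ. Call a cell of Γ small if its μ-mass is at most 9·log₂(n)/n. Then with probability at least 1 − exp(−3·C·log₂ n), the total D_n-mass of the small cells of Γ is at most 18·C·log₂(n)/n. -/

import Mathlib

/-
The small cells have total `μ`-mass `P ≤ 9·C·L/n` (with `L = log₂ n`), so the number `N` of
sample points falling in them is binomial `(n, P)`. Markov's inequality applied to `2 ^ N` gives
`ℙ(N ≥ 18·C·L) ≤ 𝔼[2 ^ N] / 2 ^ (18·C·L) = (1 + P) ^ n / 2 ^ (18·C·L)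
  ≤ exp (9·C·L - 18·log 2·C·L) ≤ exp (-3·C·L)`,
and off this event the small cells carry empirical mass `N / n ≤ 18·C·L/n`.
-/

open MeasureTheory Finset

noncomputable section

/-- A grid with `r` rows and `c` columns on ℝ², given by `r - 1` strictly increasing
row cut points and `c - 1` strictly increasing column cut points. -/
structure Grid (r c : ℕ) where
  rowCuts : Fin (r - 1) → ℝ
  colCuts : Fin (c - 1) → ℝ
  rowCuts_mono : StrictMono rowCuts
  colCuts_mono : StrictMono colCuts

/-- Interval number `i` of the partition of ℝ induced by the cut points `cuts`:
`[cuts (i-1), cuts i)`, with the first interval unbounded below and the last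
unbounded above. -/
def cutInterval {m : ℕ} (cuts : Fin (m - 1) → ℝ) (i : Fin m) : Set ℝ :=
  {t | (∀ j : Fin (m - 1), (j : ℕ) < (i : ℕ) → cuts j ≤ t) ∧
       (∀ j : Fin (m - 1), (i : ℕ) ≤ (j : ℕ) → t < cuts j)}

/-- Cell `(i, j)` (row `i`, column `j`) of a grid, as a subset of ℝ². -/
def Grid.cell {r c : ℕ} (G : Grid r c) (i : Fin r) (j : Fin c) : Set (ℝ × ℝ) :=
  {p | p.1 ∈ cutInterval G.colCuts j ∧ p.2 ∈ cutInterval G.rowCuts i}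

/-- The probability mass function on `{1,…,r} × {1,…,c}` induced by a measure `ν`
on a grid `G`: it assigns to `(i, j)` the `ν`-measure of cell `(i, j)`. -/
def gridPMF {r c : ℕ} (ν : Measure (ℝ × ℝ)) (G : Grid r c) (i : Fin r) (j : Fin c) : ℝ :=
  (ν (G.cell i j)).toReal

open Classical in
/-- The empirical measure of the sample `ω`, as a real-valued set function. -/
def empMeas {n : ℕ} (ω : Fin n → ℝ × ℝ) (S : Set (ℝ × ℝ)) : ℝ :=
  ((Finset.univ.filter (fun i => ω i ∈ S)).card : ℝ) / n

/-- The pmf on cells induced by the empirical measure of the sample `ω`. -/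
def empGridPMF {n r c : ℕ} (ω : Fin n → ℝ × ℝ) (G : Grid r c) (i : Fin r) (j : Fin c) : ℝ :=
  empMeas ω (G.cell i j)

/-- Mutual information (base 2) of a pmf `p` on `Fin r × Fin c`, with the convention
that terms with `p i j = 0` vanish. -/
def MI {r c : ℕ} (p : Fin r → Fin c → ℝ) : ℝ :=
  ∑ i, ∑ j, if p i j = 0 then 0
    else p i j * Real.logb 2 (p i j / ((∑ j', p i j') * (∑ i', p i' j)))

open Real Function ProbabilityTheory

lemma measurableSet_cutInterval {m : ℕ} (cuts : Fin (m - 1) → ℝ) (i : Fin m) :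
    MeasurableSet (cutInterval cuts i) :=
  measurableSet_setOfPred.2 <| .and
    (.forall fun _ => .forall fun _ => measurableSet_setOfPred.1 measurableSet_Ici)
    (.forall fun _ => .forall fun _ => measurableSet_setOfPred.1 measurableSet_Iio)

lemma pairwise_disjoint_cutInterval {m : ℕ} (cuts : Fin (m - 1) → ℝ) :
    Pairwise (Disjoint on cutInterval cuts) := by
  intro i i' hne
  wlog hlt : i < i' generalizing i i'
  · exact (this hne.symm (lt_of_le_of_ne (not_lt.1 hlt) hne.symm)).symm
  refine Set.disjoint_left.2 fun t hi hi' => ?_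
  have hm : (i : ℕ) < m - 1 := by omega
  exact (hi.2 ⟨i, hm⟩ le_rfl).not_ge (hi'.1 ⟨i, hm⟩ hlt)

lemma empMeas_biUnion {n : ℕ} {ι : Type*} (ω : Fin n → ℝ × ℝ) (I : Finset ι)
    {s : ι → Set (ℝ × ℝ)} (hs : Pairwise (Disjoint on s)) :
    empMeas ω (⋃ p ∈ I, s p) = ∑ p ∈ I, empMeas ω (s p) := by
  classical
  have hcard : #{i | ω i ∈ ⋃ p ∈ I, s p} = ∑ p ∈ I, #{i | ω i ∈ s p} := by
    rw [← card_biUnion]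
    · congr 1; ext i; simp
    · intro p _ q _ hpq
      exact disjoint_filter.2 fun i _ h h' => Set.disjoint_left.1 (hs hpq) h h'
  simp only [empMeas, ← sum_div]
  exact_mod_cast congrArg (fun k : ℕ => (k : ℝ) / n) hcard

namespace Grid

variable {r c : ℕ} (G : Grid r c)

lemma measurableSet_cell (i : Fin r) (j : Fin c) : MeasurableSet (G.cell i j) :=
  ((measurableSet_cutInterval _ j).preimage measurable_fst).inter
    ((measurableSet_cutInterval _ i).preimage measurable_snd)

lemma pairwise_disjoint_cell :
    Pairwise (Disjoint on fun p : Fin r × Fin c => G.cell p.1 p.2) := by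
  rintro ⟨i, j⟩ ⟨i', j'⟩ hne
  by_cases hi : i = i'
  · have hj : j ≠ j' := fun hj => hne (by rw [hi, hj])
    exact Set.disjoint_left.2 fun x hx hx' =>
      Set.disjoint_left.1 (pairwise_disjoint_cutInterval _ hj) hx.1 hx'.1
  · exact Set.disjoint_left.2 fun x hx hx' =>
      Set.disjoint_left.1 (pairwise_disjoint_cutInterval _ hi) hx.2 hx'.2

variable (μ : Measure (ℝ × ℝ))

def smallCellsUnion (t : ℝ) : Set (ℝ × ℝ) :=
  ⋃ p ∈ univ.filter (fun p : Fin r × Fin c => gridPMF μ G p.1 p.2 ≤ t), G.cell p.1 p.2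

lemma measurableSet_smallCellsUnion (t : ℝ) : MeasurableSet (G.smallCellsUnion μ t) :=
  measurableSet_biUnion _ fun p _ => G.measurableSet_cell p.1 p.2

lemma measureReal_smallCellsUnion_le {t : ℝ} (ht : 0 ≤ t) :
    μ.real (G.smallCellsUnion μ t) ≤ (r * c : ℕ) * t := by
  calc μ.real (G.smallCellsUnion μ t)
      ≤ ∑ p ∈ univ.filter (fun p : Fin r × Fin c => gridPMF μ G p.1 p.2 ≤ t),
          μ.real (G.cell p.1 p.2) := measureReal_biUnion_finset_le _ _
    _ ≤ #(univ.filter (fun p : Fin r × Fin c => gridPMF μ G p.1 p.2 ≤ t)) * t :=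
        sum_le_card_nsmul _ _ _ (fun p hp => (mem_filter.1 hp).2) |>.trans_eq (nsmul_eq_mul _ _)
    _ ≤ (r * c : ℕ) * t := by
        gcongr
        simpa using card_filter_le (univ : Finset (Fin r × Fin c)) _

lemma sum_empGridPMF_small {n : ℕ} (ω : Fin n → ℝ × ℝ) (t : ℝ) :
    (∑ i, ∑ j, if gridPMF μ G i j ≤ t then empGridPMF ω G i j else 0) =
      empMeas ω (G.smallCellsUnion μ t) := by
  rw [smallCellsUnion, empMeas_biUnion ω _ G.pairwise_disjoint_cell, sum_filter,
    Fintype.sum_prod_type]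
  rfl

end Grid

open Classical in
lemma prod_one_add_indicator_one {α ι : Type*} [Fintype ι] {S : Set α} (ω : ι → α) :
    ∏ i, (1 + S.indicator 1 (ω i)) = (2 : ℝ) ^ #{i | ω i ∈ S} := by
  simp only [Set.indicator_apply, Pi.one_apply, add_ite, add_zero, one_add_one_eq_two]
  rw [prod_ite, prod_const, prod_const, one_pow, mul_one]

section Binomial

variable {α : Type*} [MeasurableSpace α] {S : Set α}

open Classical in
lemma measurable_card_filter_mem (hS : MeasurableSet S) (n : ℕ) :
    Measurable fun ω : Fin n → α => (#{i | ω i ∈ S} : ℝ) := by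
  simp only [card_filter, Nat.cast_sum, Nat.cast_ite, Nat.cast_one, Nat.cast_zero]
  exact measurable_sum _ fun i _ =>
    Measurable.ite (hS.preimage (measurable_pi_apply i)) measurable_const measurable_const

open Classical in
/-- Chernoff bound at the exponent `log 2`. -/
lemma measureReal_pi_card_mem_ge_le_exp (μ : Measure α) [IsProbabilityMeasure μ]
    (hS : MeasurableSet S) (n : ℕ) (a : ℝ) :
    (Measure.pi fun _ : Fin n => μ).real {ω | a ≤ #{i | ω i ∈ S}} ≤
      exp (n * μ.real S - log 2 * a) := by
  set g : α → ℝ := fun x => 1 + S.indicator 1 x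
  have hind : Integrable (S.indicator (1 : α → ℝ)) μ :=
    (integrable_indicator_iff hS).2 (integrable_const 1).integrableOn
  have hg : Integrable g μ := (integrable_const 1).add hind
  have hexp : ∀ ω : Fin n → α, exp (log 2 * #{i | ω i ∈ S}) = ∏ i, g (ω i) := by
    intro ω
    rw [prod_one_add_indicator_one, ← rpow_natCast, rpow_def_of_pos two_pos]
  have hmgf : mgf (fun ω : Fin n → α => (#{i | ω i ∈ S} : ℝ)) (Measure.pi fun _ => μ)
      (log 2) = (1 + μ.real S) ^ n := by
    simp only [mgf, hexp]
    rw [integral_fintype_prod_eq_pow, integral_add (integrable_const 1) hind,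
      integral_indicator_one hS]
    simp
  calc _ ≤ exp (-log 2 * a) * (1 + μ.real S) ^ n := by
        rw [← hmgf]
        refine measure_ge_le_exp_mul_mgf a (log_nonneg one_le_two) ?_
        simp only [hexp]
        exact Integrable.fintype_prod (f := fun _ => g) fun _ => hg
    _ ≤ exp (-log 2 * a) * exp (μ.real S) ^ n := by
        gcongr
        linarith [add_one_le_exp (μ.real S)]
    _ = exp (n * μ.real S - log 2 * a) := by
        rw [← exp_nat_mul, ← exp_add]; ring_nf

end Binomial

theorem stmt12_general (μ : Measure (ℝ × ℝ)) [IsProbabilityMeasure μ]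
    (r c : ℕ) (Γ : Grid r c) (n : ℕ) :
    ENNReal.ofReal (1 - Real.exp (-(3 * ((r * c : ℕ) : ℝ) * Real.logb 2 n))) ≤
      (Measure.pi fun _ : Fin n => μ)
        {ω | (∑ i, ∑ j,
            if gridPMF μ Γ i j ≤ 9 * Real.logb 2 n / n then
              empGridPMF ω Γ i j else 0) ≤
          18 * ((r * c : ℕ) : ℝ) * Real.logb 2 n / n} := by
  classical
  set L := logb 2 n
  set C : ℝ := ((r * c : ℕ) : ℝ)
  set U := Γ.smallCellsUnion μ (9 * L / n)
  set B := {ω : Fin n → ℝ × ℝ | 18 * C * L ≤ #{i | ω i ∈ U}}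
  have hL : 0 ≤ L := div_nonneg (log_natCast_nonneg n) (log_nonneg one_le_two)
  have hmass : n * μ.real U ≤ 9 * C * L := by
    have hU := Γ.measureReal_smallCellsUnion_le μ (by positivity : 0 ≤ 9 * L / n)
    rcases n.eq_zero_or_pos with rfl | hn
    · rw [Nat.cast_zero, zero_mul]; positivity
    · calc n * μ.real U ≤ n * (C * (9 * L / n)) := by gcongr
        _ = 9 * C * L := by field_simp
  have hB : (Measure.pi fun _ : Fin n => μ).real B ≤ exp (-(3 * C * L)) := by
    refine (measureReal_pi_card_mem_ge_le_exp μ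
      (Γ.measurableSet_smallCellsUnion μ _) n _).trans ?_
    have hCL : 0 ≤ C * L := by positivity
    have hlog2 := log_two_gt_d9
    gcongr
    nlinarith
  have hgood : Bᶜ ⊆ {ω | (∑ i, ∑ j, if gridPMF μ Γ i j ≤ 9 * L / n then
      empGridPMF ω Γ i j else 0) ≤ 18 * C * L / n} := by
    intro ω hω
    simp only [B, Set.mem_compl_iff, Set.mem_ofPred_eq, not_le] at hω ⊢
    rw [Γ.sum_empGridPMF_small]
    exact div_le_div_of_nonneg_right hω.le n.cast_nonneg
  have hBmeas : MeasurableSet B := measurableSet_le measurable_const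
    (measurable_card_filter_mem (Γ.measurableSet_smallCellsUnion μ _) n)
  calc ENNReal.ofReal (1 - exp (-(3 * C * L)))
      ≤ ENNReal.ofReal (1 - (Measure.pi fun _ : Fin n => μ).real B) :=
        ENNReal.ofReal_le_ofReal (by linarith)
    _ = (Measure.pi fun _ : Fin n => μ) Bᶜ := by
        rw [← probReal_compl_eq_one_sub hBmeas, ofReal_measureReal]
    _ ≤ _ := measure_mono hgood

theorem stmt12 (μ : Measure (ℝ × ℝ)) [IsProbabilityMeasure μ]
    (r c : ℕ) (Γ : Grid r c) (n : ℕ) (hn : 2 ≤ n) :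
    ENNReal.ofReal (1 - Real.exp (-(3 * ((r * c : ℕ) : ℝ) * Real.logb 2 n))) ≤
      (Measure.pi fun _ : Fin n => μ)
        {ω | (∑ i, ∑ j,
            if gridPMF μ Γ i j ≤ 9 * Real.logb 2 n / n then
              empGridPMF ω Γ i j else 0) ≤
          18 * ((r * c : ℕ) : ℝ) * Real.logb 2 n / n} :=
  stmt12_general μ r c Γ n

end
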